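/- Let n1 be a positive integer with the property that e_{n1−1,r}(ν)^r ≤ C1·C2^{−1}·18^{−(r+s0)} for every Borel probability measure ν on ℝ^q whose support is compact of diameter at most 1. Let k ≥ k0, σ ∈ Ω_k, and let β ⊆ ℝ^q be a finite nonempty set with card(β ∩ B(c_σ,(9/4)m^{-k})) < n1. Write E' := B(c_σ,(9/8)m^{-k}). Then: (i) if there exist y ∈ E_σ ∩ K and b ∈ β ∖ B(c_σ,(9/4)m^{-k}) with d(y,b) = d(y,β), then ∫_{E'} d(x,β)^r dμ(x) ≥ μ(E')·diam(E')^r·e_{n1−1,r}(λ_{E'})^r; (ii) otherwise, ∫_{E_σ} d(x,β)^r dμ(x) ≥ μ(E_σ)·diam(E_σ)^r·e_{n1−1,r}(λ_{E_σ})^r. -/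

import Mathlib

open MeasureTheory Metric Set

noncomputable section

variable {E : Type*} [NormedAddCommGroup E] [NormedSpace ℝ E]
  [MeasurableSpace E] [BorelSpace E]

/-- The (topological) support of a Borel measure: the set of points all of whose
neighborhoods have positive measure. -/
def msupp (μ : Measure E) : Set E := {x | ∀ ε : ℝ, 0 < ε → 0 < μ (ball x ε)}

/-- The set of achievable quantization integrals `∫ d(x,α)^r dν` over sets `α` with
`1 ≤ card α ≤ n`. -/
def quantSet (ν : Measure E) (r : ℝ) (n : ℕ) : Set ℝ :=
  {I | ∃ α : Finset E, α.Nonempty ∧ α.card ≤ n ∧ I = ∫ x, infDist x (α : Set E) ^ r ∂ν}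

/-- The `n`-th quantization error of order `r`, raised to the power `r`:
`e_{n,r}(ν)^r = inf { ∫ d(x,α)^r dν : 1 ≤ card α ≤ n }`. -/
def quantErrPow (ν : Measure E) (r : ℝ) (n : ℕ) : ℝ := sInf (quantSet ν r n)

/-- `α` is an `n`-optimal set for `ν` of order `r`. -/
def IsOptimalSet (ν : Measure E) (r : ℝ) (n : ℕ) (α : Finset E) : Prop :=
  α.Nonempty ∧ α.card ≤ n ∧ (∫ x, infDist x (α : Set E) ^ r ∂ν) = quantErrPow ν r n

/-- `P` is a Voronoi partition (into Borel sets) with respect to the finite set `α`. -/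
def IsVoronoiPartition (α : Finset E) (P : E → Set E) : Prop :=
  (∀ a ∈ α, MeasurableSet (P a)) ∧
  ((⋃ a ∈ α, P a) = univ) ∧
  (∀ a ∈ α, ∀ b ∈ α, a ≠ b → Disjoint (P a) (P b)) ∧
  (∀ a ∈ α, {x | dist x a < infDist x ((α : Set E) \ {a})} ⊆ P a) ∧
  (∀ a ∈ α, P a ⊆ {x | dist x a = infDist x (α : Set E)})

/-- `I_a(α,ν) = ∫_{P_a(α)} d(x,α)^r dν`. -/
def voronoiI (ν : Measure E) (r : ℝ) (α : Finset E) (P : E → Set E) (a : E) : ℝ :=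
  ∫ x in P a, infDist x (α : Set E) ^ r ∂ν

/-- `μ` is `s0`-dimensional Ahlfors–David regular with constants `ε0, C1, C2`, together
with the global upper bound (valid for all centers and radii). -/
def IsAhlfors (μ : Measure E) (s0 ε0 C1 C2 : ℝ) : Prop :=
  0 < s0 ∧ 0 < ε0 ∧ 0 < C1 ∧ 0 < C2 ∧
  (∀ x ∈ msupp μ, ∀ ε : ℝ, 0 < ε → ε < ε0 →
    ENNReal.ofReal (C1 * ε ^ s0) ≤ μ (closedBall x ε) ∧
    μ (closedBall x ε) ≤ ENNReal.ofReal (C2 * ε ^ s0)) ∧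
  (∀ x : E, ∀ ε : ℝ, 0 < ε → μ (closedBall x ε) ≤ ENNReal.ofReal (C2 * ε ^ s0))

/-- `h` is a similitude of ratio `ρ`. -/
def IsSimilitude (h : E → E) (ρ : ℝ) : Prop :=
  Function.Surjective h ∧ ∀ x y, dist (h x) (h y) = ρ * dist x y

/-- The measure `λ_B = μ(·|B) ∘ h`, i.e. `λ_B(A) = μ(h(A) ∩ B)/μ(B)`. -/
def condPull (μ : Measure E) (B : Set E) (h : E → E) : Measure E :=
  Measure.comap h (ProbabilityTheory.cond μ B)

/-- There exist `j` pairwise disjoint closed balls of radius `ρ` centered in `K`. -/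
def PackingNum (K : Set E) (ρ : ℝ) (j : ℕ) : Prop :=
  ∃ c : Fin j → E, (∀ i, c i ∈ K) ∧
    Pairwise fun i i' => Disjoint (closedBall (c i) ρ) (closedBall (c i') ρ)

end

/-!
In case (i) the `β`-nearest point of `y` lies more than `(9/4)m^{-k}` from `c_σ`, so
`d(·,β) ≥ (9/8)m^{-k}` on the ball `B(y, m^{-k}/8) ⊆ E'`, whose mass is at least
`C1 (m^{-k}/8)^{s0}`. By Ahlfors regularity and the choice of `n1`, the left-hand side is at most
`C2 ((9/8)m^{-k})^{s0} ((9/4)m^{-k})^r · C1 C2⁻¹ 18^{-(r+s0)}`, and `18 = 16 · (9/8) = 8 · (9/4)`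
makes this at most `C1 (m^{-k}/8)^{s0} ((9/8)m^{-k})^r`.

In case (ii) every point of `E_σ ∩ K` has a `β`-nearest point among the fewer than `n1` points `γ`
of `β` in `B(c_σ,(9/4)m^{-k})`. Pulling `γ` back by the similitude `h` of ratio `ρ = diam E_σ`
gives a competitor for `e_{n1-1,r}(λ_{E_σ})` with
`∫ d(·,h⁻¹γ)^r dλ = ρ^{-r} μ(E_σ)⁻¹ ∫_{E_σ} d(·,γ)^r dμ ≤ ρ^{-r} μ(E_σ)⁻¹ ∫_{E_σ} d(·,β)^r dμ`.
-/

section Support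

variable {E : Type*} [NormedAddCommGroup E] [MeasurableSpace E]

theorem isClosed_msupp (μ : Measure E) : IsClosed (msupp μ) := by
  refine isClosed_of_closure_subset fun x hx ε hε => ?_
  obtain ⟨y, hy, hxy⟩ := Metric.mem_closure_iff.1 hx (ε / 2) (half_pos hε)
  refine (hy (ε / 2) (half_pos hε)).trans_le (measure_mono fun z hz => ?_)
  rw [mem_ball] at hz ⊢
  linarith [dist_triangle z y x, dist_comm x y]

theorem ae_mem_msupp [SecondCountableTopology E] (μ : Measure E) : ∀ᵐ x ∂μ, x ∈ msupp μ := by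
  refine measure_null_of_locally_null _ fun x hx => ?_
  simp only [msupp, mem_compl_iff, Set.mem_ofPred_eq, not_forall, not_lt,
    nonpos_iff_eq_zero] at hx
  obtain ⟨ε, hε, hμε⟩ := hx
  exact ⟨ball x ε, mem_nhdsWithin_of_mem_nhds (ball_mem_nhds x hε), hμε⟩

theorem msupp_cond_subset [OpensMeasurableSpace E] (μ : Measure E) (B : Set E) :
    msupp (ProbabilityTheory.cond μ B) ⊆ closure B := by
  intro x hx
  by_contra hxB
  obtain ⟨ε, hε, hfar⟩ : ∃ ε > 0, ∀ y ∈ B, ε ≤ dist x y := by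
    simpa [Metric.mem_closure_iff] using hxB
  have hempty : ball x ε ∩ B = ∅ := eq_empty_of_forall_notMem fun y ⟨hy, hyB⟩ =>
    (hfar y hyB).not_gt (by rwa [mem_ball, dist_comm] at hy)
  have := hx ε hε
  rw [ProbabilityTheory.cond, Measure.smul_apply, Measure.restrict_apply measurableSet_ball,
    hempty, measure_empty, smul_zero] at this
  exact this.false

end Support

namespace IsSimilitude

variable {E : Type*} [NormedAddCommGroup E] {h : E → E} {ρ : ℝ}

theorem lipschitzWith (hs : IsSimilitude h ρ) (hρ : 0 ≤ ρ) : LipschitzWith ρ.toNNReal h :=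
  .of_dist_le_mul fun x y => by rw [Real.coe_toNNReal _ hρ, hs.2]

theorem antilipschitzWith (hs : IsSimilitude h ρ) (hρ : 0 < ρ) :
    AntilipschitzWith ρ⁻¹.toNNReal h :=
  .of_le_mul_dist fun x y => by
    rw [Real.coe_toNNReal _ (inv_nonneg.2 hρ.le), hs.2, inv_mul_cancel_left₀ hρ.ne']

theorem isClosedEmbedding [CompleteSpace E] (hs : IsSimilitude h ρ) (hρ : 0 < ρ) :
    Topology.IsClosedEmbedding h :=
  (hs.antilipschitzWith hρ).isClosedEmbedding (hs.lipschitzWith hρ.le).uniformContinuous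

theorem infDist_image (hs : IsSimilitude h ρ) (hρ : 0 < ρ) {t : Set E} (ht : t.Nonempty) (x : E) :
    infDist (h x) (h '' t) = ρ * infDist x t := by
  refine le_antisymm (not_lt.1 fun hlt => ?_) (not_lt.1 fun hlt => ?_)
  · obtain ⟨z, hz, hxz⟩ := (infDist_lt_iff ht).1 ((lt_div_iff₀' hρ).2 hlt)
    have := (infDist_le_dist_of_mem (mem_image_of_mem h hz)).trans_eq (hs.2 x z)
    linarith [(lt_div_iff₀' hρ).1 hxz]
  · obtain ⟨_, ⟨z, hz, rfl⟩, hxz⟩ := (infDist_lt_iff (ht.image h)).1 hlt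
    rw [hs.2] at hxz
    linarith [(mul_lt_mul_iff_right₀ hρ).1 hxz, infDist_le_dist_of_mem (x := x) hz]

theorem infDist_preimage (hs : IsSimilitude h ρ) (hρ : 0 < ρ) {s : Set E} (hsne : s.Nonempty)
    (x : E) : infDist x (h ⁻¹' s) = ρ⁻¹ * infDist (h x) s := by
  conv_rhs => rw [← hs.1.image_preimage s, hs.infDist_image hρ (hsne.preimage hs.1)]
  rw [inv_mul_cancel_left₀ hρ.ne']

theorem diam_preimage_le (hs : IsSimilitude h ρ) (hρ : 0 < ρ) {s : Set E}
    (hsb : Bornology.IsBounded s) : diam (h ⁻¹' s) ≤ ρ⁻¹ * diam s :=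
  diam_le_of_forall_dist_le (by positivity) fun x hx y hy => by
    rw [← inv_mul_cancel_left₀ hρ.ne' (dist x y), ← hs.2]
    exact mul_le_mul_of_nonneg_left (dist_le_diam_of_mem hsb hx hy) (by positivity)

variable [MeasurableSpace E] [BorelSpace E] [CompleteSpace E]

theorem msupp_comap_subset (hs : IsSimilitude h ρ) (hρ : 0 < ρ) (ν : Measure E) :
    msupp (Measure.comap h ν) ⊆ h ⁻¹' msupp ν := fun x hx ε hε => by
  have hpos := hx (ε / ρ) (div_pos hε hρ)
  rw [(hs.isClosedEmbedding hρ).measurableEmbedding.comap_apply] at hpos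
  refine hpos.trans_le (measure_mono ?_)
  rintro _ ⟨y, hy, rfl⟩
  rw [mem_ball, hs.2]
  rw [mem_ball, lt_div_iff₀' hρ] at hy
  exact hy

end IsSimilitude

section CondPull

variable {E : Type*} [NormedAddCommGroup E] [MeasurableSpace E] [BorelSpace E]
  [CompleteSpace E] {μ : Measure E} {B : Set E} {h : E → E} {ρ : ℝ}

theorem isProbabilityMeasure_condPull [IsFiniteMeasure μ] (hμB : μ B ≠ 0)
    (hs : IsSimilitude h ρ) (hρ : 0 < ρ) : IsProbabilityMeasure (condPull μ B h) := by
  have := ProbabilityTheory.cond_isProbabilityMeasure (μ := μ) hμB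
  constructor
  rw [condPull, (hs.isClosedEmbedding hρ).measurableEmbedding.comap_apply, image_univ,
    hs.1.range_eq, measure_univ]

theorem msupp_condPull_subset (hB : IsClosed B) (hs : IsSimilitude h ρ) (hρ : 0 < ρ) :
    msupp (condPull μ B h) ⊆ h ⁻¹' B :=
  (hs.msupp_comap_subset hρ _).trans
    (preimage_mono ((msupp_cond_subset μ B).trans hB.closure_subset))

theorem isCompact_msupp_condPull (hB : IsCompact B) (hs : IsSimilitude h ρ) (hρ : 0 < ρ) :
    IsCompact (msupp (condPull μ B h)) :=
  ((hs.isClosedEmbedding hρ).isCompact_preimage hB).of_isClosed_subset (isClosed_msupp _)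
    (msupp_condPull_subset hB.isClosed hs hρ)

theorem diam_msupp_condPull_le_one (hB : IsCompact B) (hs : IsSimilitude h (diam B))
    (hd : 0 < diam B) : diam (msupp (condPull μ B h)) ≤ 1 :=
  calc diam (msupp (condPull μ B h)) ≤ diam (h ⁻¹' B) :=
        diam_mono (msupp_condPull_subset hB.isClosed hs hd)
          ((hs.isClosedEmbedding hd).isCompact_preimage hB).isBounded
    _ ≤ (diam B)⁻¹ * diam B := hs.diam_preimage_le hd hB.isBounded
    _ = 1 := inv_mul_cancel₀ hd.ne'

end CondPull

theorem mul_diam_rpow_mul_le_of_diam_pos {X : Type*} [PseudoMetricSpace X] {B : Set X}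
    {r a q I : ℝ} (hr : 0 < r) (hI : 0 ≤ I) (H : 0 < diam B → a * diam B ^ r * q ≤ I) :
    a * diam B ^ r * q ≤ I := by
  rcases (diam_nonneg (s := B)).eq_or_lt with hd | hd
  · rwa [← hd, Real.zero_rpow hr.ne', mul_zero, zero_mul]
  · exact H hd

section Quantization

variable {E : Type*} [NormedAddCommGroup E] [MeasurableSpace E]

theorem quantErrPow_le_integral {ν : Measure E} {r : ℝ} {n : ℕ} {α : Finset E}
    (hα : α.Nonempty) (hαn : α.card ≤ n) :
    quantErrPow ν r n ≤ ∫ x, infDist x (α : Set E) ^ r ∂ν := by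
  refine csInf_le ⟨0, ?_⟩ ⟨α, hα, hαn, rfl⟩
  rintro _ ⟨α', -, -, rfl⟩
  exact integral_nonneg fun x => Real.rpow_nonneg infDist_nonneg r

theorem integrableOn_infDist_rpow [OpensMeasurableSpace E] {μ : Measure E}
    [IsFiniteMeasureOnCompacts μ] {B : Set E} (hB : IsCompact B) (s : Set E) {r : ℝ}
    (hr : 0 ≤ r) : IntegrableOn (fun x => infDist x s ^ r) B μ :=
  ((continuous_infDist_pt s).rpow_const fun _ => Or.inr hr).continuousOn.integrableOn_compact hB

theorem measure_mul_rpow_mul_quantErrPow_condPull_le [BorelSpace E] [CompleteSpace E]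
    {μ : Measure E} [IsFiniteMeasure μ] {B : Set E} {h : E → E} {ρ r : ℝ} {n : ℕ}
    (hs : IsSimilitude h ρ) (hρ : 0 < ρ) {γ : Finset E} (hγ : γ.Nonempty) (hγn : γ.card ≤ n) :
    (μ B).toReal * ρ ^ r * quantErrPow (condPull μ B h) r n ≤
      ∫ x in B, infDist x (γ : Set E) ^ r ∂μ := by
  classical
  by_cases hμB : μ B = 0
  · simp [hμB, Measure.restrict_eq_zero.2 hμB]
  have hemb := (hs.isClosedEmbedding hρ).measurableEmbedding
  set δ := γ.preimage h hemb.injective.injOn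
  have hδ : (δ : Set E) = h ⁻¹' γ := Finset.coe_preimage _ _
  have hδne : δ.Nonempty := by
    rw [← Finset.coe_nonempty, hδ]
    exact (Finset.coe_nonempty.2 hγ).preimage hs.1
  have hδn : δ.card ≤ n :=
    ((Finset.card_preimage _ _ _).trans_le (Finset.card_filter_le _ _)).trans hγn
  have hρr : 0 < ρ ^ r := Real.rpow_pos_of_pos hρ r
  have hμBr : 0 < (μ B).toReal := ENNReal.toReal_pos hμB (measure_ne_top μ B)
  have hint : ∫ u, infDist u (δ : Set E) ^ r ∂condPull μ B h =
      (ρ ^ r)⁻¹ * ((μ B).toReal⁻¹ * ∫ x in B, infDist x (γ : Set E) ^ r ∂μ) := by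
    calc ∫ u, infDist u (δ : Set E) ^ r ∂condPull μ B h
        = ∫ u, (ρ ^ r)⁻¹ * infDist (h u) (γ : Set E) ^ r ∂condPull μ B h := by
          congr 1 with u
          rw [hδ, hs.infDist_preimage hρ (Finset.coe_nonempty.2 hγ),
            Real.mul_rpow (inv_nonneg.2 hρ.le) infDist_nonneg, Real.inv_rpow hρ.le]
      _ = (ρ ^ r)⁻¹ * ∫ y, infDist y (γ : Set E) ^ r ∂ProbabilityTheory.cond μ B := by
          rw [integral_const_mul, condPull,
            ← hemb.integral_map (fun y => infDist y (γ : Set E) ^ r), hemb.map_comap,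
            hs.1.range_eq, Measure.restrict_univ]
      _ = _ := by
          rw [ProbabilityTheory.cond, integral_smul_measure, smul_eq_mul, ENNReal.toReal_inv]
  calc (μ B).toReal * ρ ^ r * quantErrPow (condPull μ B h) r n
      ≤ (μ B).toReal * ρ ^ r * ∫ u, infDist u (δ : Set E) ^ r ∂condPull μ B h :=
        mul_le_mul_of_nonneg_left (quantErrPow_le_integral hδne hδn) (by positivity)
    _ = ∫ x in B, infDist x (γ : Set E) ^ r ∂μ := by
        rw [hint]
        field_simp

end Quantization

theorem rpow_mul_rpow_neg_le {x y z s : ℝ} (hx : 0 ≤ x) (hz : 0 < z) (hs : 0 ≤ s)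
    (hxy : x ≤ z * y) : x ^ s * z ^ (-s) ≤ y ^ s := by
  rw [Real.rpow_neg hz.le, ← div_eq_mul_inv, ← Real.div_rpow hx hz.le]
  exact Real.rpow_le_rpow (div_nonneg hx hz.le) ((div_le_iff₀' hz).2 hxy) hs

theorem rpow_mul_rpow_mul_eighteen_rpow_neg_le {ρ r s : ℝ} (hρ : 0 ≤ ρ) (hr : 0 ≤ r)
    (hs : 0 ≤ s) :
    (9 / 8 * ρ) ^ s * (9 / 4 * ρ) ^ r * (18 : ℝ) ^ (-(r + s)) ≤ (ρ / 8) ^ s * (9 / 8 * ρ) ^ r := by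
  rw [neg_add, Real.rpow_add (by norm_num),
    show ∀ a b c d : ℝ, a * b * (c * d) = (a * d) * (b * c) by intros; ring]
  exact mul_le_mul (rpow_mul_rpow_neg_le (by positivity) (by norm_num) hs (by linarith))
    (rpow_mul_rpow_neg_le (by positivity) (by norm_num) hr (by linarith))
    (by positivity) (by positivity)

namespace IsAhlfors

variable {E : Type*} [NormedAddCommGroup E] [MeasurableSpace E] {μ : Measure E}
  {s0 ε0 C1 C2 : ℝ}

theorem le_measureReal_closedBall [IsFiniteMeasure μ] (hμ : IsAhlfors μ s0 ε0 C1 C2) {x : E}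
    (hx : x ∈ msupp μ) {ε : ℝ} (hε : 0 < ε) (hεε0 : ε < ε0) :
    C1 * ε ^ s0 ≤ (μ (closedBall x ε)).toReal :=
  (ENNReal.ofReal_le_iff_le_toReal (measure_ne_top _ _)).1 (hμ.2.2.2.2.1 x hx ε hε hεε0).1

theorem measureReal_closedBall_le (hμ : IsAhlfors μ s0 ε0 C1 C2) (x : E) {ε : ℝ}
    (hε : 0 < ε) : (μ (closedBall x ε)).toReal ≤ C2 * ε ^ s0 :=
  ENNReal.toReal_le_of_le_ofReal (mul_nonneg hμ.2.2.2.1.le (Real.rpow_nonneg hε.le s0))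
    (hμ.2.2.2.2.2 x ε hε)

end IsAhlfors

section Bounds

variable {E : Type*} [NormedAddCommGroup E] [MeasurableSpace E] [BorelSpace E] {μ : Measure E}
  [IsFiniteMeasure μ] {r : ℝ} {n : ℕ} {h : E → E}

theorem measureReal_mul_rpow_le_setIntegral_infDist_rpow {S B β : Set E} {a : ℝ}
    (hS : MeasurableSet S) (hB : IsCompact B) (hSB : S ⊆ B) (ha : 0 ≤ a) (hr : 0 ≤ r)
    (haS : ∀ x ∈ S, a ≤ infDist x β) : (μ S).toReal * a ^ r ≤ ∫ x in B, infDist x β ^ r ∂μ :=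
  calc (μ S).toReal * a ^ r ≤ ∫ x in S, infDist x β ^ r ∂μ :=
        setIntegral_ge_of_const_le hS (measure_ne_top _ _)
          (fun x hx => Real.rpow_le_rpow ha (haS x hx) hr)
          ((integrableOn_infDist_rpow hB β hr).mono_set hSB)
    _ ≤ ∫ x in B, infDist x β ^ r ∂μ :=
        setIntegral_mono_set (integrableOn_infDist_rpow hB β hr)
          (ae_of_all _ fun _ => Real.rpow_nonneg infDist_nonneg r) hSB.eventuallyLE

theorem le_setIntegral_infDist_rpow_of_far [ProperSpace E] {s0 ε0 C1 C2 : ℝ}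
    (hμ : IsAhlfors μ s0 ε0 C1 C2) (hr : 0 < r) {ρ : ℝ} (hρ : 0 ≤ ρ) (hρε : ρ < ε0) {c y : E}
    (hyc : dist y c ≤ ρ) (hy : y ∈ msupp μ) {β : Set E} (hfar : 5 / 4 * ρ ≤ infDist y β)
    (hn : ∀ ν : Measure E, IsProbabilityMeasure ν → IsCompact (msupp ν) → diam (msupp ν) ≤ 1 →
      quantErrPow ν r n ≤ C1 * C2⁻¹ * 18 ^ (-(r + s0)))
    (hh : IsSimilitude h (diam (closedBall c (9 / 8 * ρ)))) :
    (μ (closedBall c (9 / 8 * ρ))).toReal * diam (closedBall c (9 / 8 * ρ)) ^ r *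
        quantErrPow (condPull μ (closedBall c (9 / 8 * ρ)) h) r n ≤
      ∫ x in closedBall c (9 / 8 * ρ), infDist x β ^ r ∂μ := by
  set B := closedBall c (9 / 8 * ρ)
  refine mul_diam_rpow_mul_le_of_diam_pos hr
    (setIntegral_nonneg measurableSet_closedBall fun _ _ => Real.rpow_nonneg infDist_nonneg r)
    fun hd => ?_
  have ⟨hs0, _, hC1, hC2, _⟩ := hμ
  have hdiam : diam B ≤ 9 / 4 * ρ := by
    linarith [diam_closedBall (x := c) (by positivity : 0 ≤ 9 / 8 * ρ)]
  have hρ : 0 < ρ := by linarith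
  have hyB : closedBall y (ρ / 8) ⊆ B := closedBall_subset_closedBall' (by linarith)
  have hfar' : ∀ x ∈ closedBall y (ρ / 8), 9 / 8 * ρ ≤ infDist x β := fun x hx => by
    linarith [infDist_le_infDist_add_dist (x := y) (y := x) (s := β), mem_closedBall'.1 hx]
  have hμy := hμ.le_measureReal_closedBall hy (by positivity : 0 < ρ / 8) (by linarith)
  have hμB : μ B ≠ 0 := fun h0 => by
    rw [measure_mono_null hyB h0, ENNReal.toReal_zero] at hμy
    exact hμy.not_gt (by positivity)
  have hq := hn _ (isProbabilityMeasure_condPull hμB hh hd)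
    (isCompact_msupp_condPull (isCompact_closedBall c _) hh hd)
    (diam_msupp_condPull_le_one (isCompact_closedBall c _) hh hd)
  calc (μ B).toReal * diam B ^ r * quantErrPow (condPull μ B h) r n
      ≤ (μ B).toReal * diam B ^ r * (C1 * C2⁻¹ * 18 ^ (-(r + s0))) := by gcongr
    _ ≤ C2 * (9 / 8 * ρ) ^ s0 * (9 / 4 * ρ) ^ r * (C1 * C2⁻¹ * 18 ^ (-(r + s0))) := by
        gcongr
        exact hμ.measureReal_closedBall_le c (by positivity)
    _ = C1 * ((9 / 8 * ρ) ^ s0 * (9 / 4 * ρ) ^ r * 18 ^ (-(r + s0))) := by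
        field_simp
    _ ≤ C1 * ((ρ / 8) ^ s0 * (9 / 8 * ρ) ^ r) :=
        mul_le_mul_of_nonneg_left (rpow_mul_rpow_mul_eighteen_rpow_neg_le hρ.le hr.le hs0.le)
          hC1.le
    _ ≤ (μ (closedBall y (ρ / 8))).toReal * (9 / 8 * ρ) ^ r := by
        rw [← mul_assoc]
        gcongr
    _ ≤ ∫ x in B, infDist x β ^ r ∂μ :=
        measureReal_mul_rpow_le_setIntegral_infDist_rpow measurableSet_closedBall
          (isCompact_closedBall _ _) hyB (by positivity) hr.le hfar'

theorem le_setIntegral_infDist_rpow_of_near [CompleteSpace E] [SecondCountableTopology E]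
    (hr : 0 < r) {A B : Set E} (hB : IsCompact B) {β : Finset E}
    (hβA : ((β : Set E) ∩ A).ncard ≤ n) (hne : (B ∩ msupp μ).Nonempty)
    (hnear : ∀ x ∈ B ∩ msupp μ, ∃ b ∈ β, b ∈ A ∧ dist x b = infDist x β)
    (hh : IsSimilitude h (diam B)) :
    (μ B).toReal * diam B ^ r * quantErrPow (condPull μ B h) r n ≤
      ∫ x in B, infDist x (β : Set E) ^ r ∂μ := by
  classical
  set γ := β.filter (· ∈ A)
  have hγ : (γ : Set E) = (β : Set E) ∩ A := Finset.coe_filter _ _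
  have hγn : γ.card ≤ n := by rwa [← ncard_coe_finset, hγ]
  have hγne : γ.Nonempty := by
    obtain ⟨x, hx⟩ := hne
    obtain ⟨b, hb, hbA, -⟩ := hnear x hx
    exact ⟨b, Finset.mem_filter.2 ⟨hb, hbA⟩⟩
  have hle : ∀ᵐ x ∂μ, x ∈ B → infDist x γ ^ r ≤ infDist x β ^ r := by
    filter_upwards [ae_mem_msupp μ] with x hxK hxB
    obtain ⟨b, hb, hbA, hxb⟩ := hnear x ⟨hxB, hxK⟩
    refine Real.rpow_le_rpow infDist_nonneg ?_ hr.le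
    exact hxb ▸ infDist_le_dist_of_mem (hγ ▸ ⟨hb, hbA⟩)
  refine mul_diam_rpow_mul_le_of_diam_pos hr
    (setIntegral_nonneg hB.measurableSet fun _ _ => Real.rpow_nonneg infDist_nonneg r)
    fun hd => ?_
  exact (measure_mul_rpow_mul_quantErrPow_condPull_le hh hd hγne hγn).trans
    (setIntegral_mono_on_ae (integrableOn_infDist_rpow hB _ hr.le)
      (integrableOn_infDist_rpow hB _ hr.le) hB.measurableSet hle)

end Bounds

theorem stmt12_general {E : Type*} [NormedAddCommGroup E] [NormedSpace ℝ E]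
    [MeasurableSpace E] [BorelSpace E] [FiniteDimensional ℝ E]
    (r : ℝ) (hr : 0 < r)
    (μ : MeasureTheory.Measure E) [MeasureTheory.IsProbabilityMeasure μ]
    (s0 ε0 C1 C2 : ℝ) (hμ : IsAhlfors μ s0 ε0 C1 C2)
    (m : ℕ) (k0 : ℕ)
    (hk0 : 2 * ((m : ℝ) ^ k0)⁻¹ < ε0)
    (φ : ℕ → ℕ)
    (ctr : (k : ℕ) → Fin (φ k) → E)
    (hctr : ∀ k, k0 ≤ k → (∀ i, ctr k i ∈ msupp μ) ∧
      Pairwise fun i i' => Disjoint (Metric.closedBall (ctr k i) (((m : ℝ) ^ k)⁻¹))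
        (Metric.closedBall (ctr k i') (((m : ℝ) ^ k)⁻¹)))
    (n1 : ℕ)
    (hn1 : ∀ ν : MeasureTheory.Measure E, MeasureTheory.IsProbabilityMeasure ν →
      IsCompact (msupp ν) → Metric.diam (msupp ν) ≤ 1 →
      quantErrPow ν r (n1 - 1) ≤ C1 * C2⁻¹ * (18 : ℝ) ^ (-(r + s0)))
    (k : ℕ) (hk : k0 ≤ k) (σ : Fin (φ k)) (β : Finset E) (hβ : β.Nonempty)
    (hβcard :
      ((β : Set E) ∩ Metric.closedBall (ctr k σ) ((9 / 4 : ℝ) * ((m : ℝ) ^ k)⁻¹)).ncard < n1) :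
    ((∃ y ∈ Metric.closedBall (ctr k σ) (((m : ℝ) ^ k)⁻¹) ∩ msupp μ, ∃ b ∈ β,
        b ∉ Metric.closedBall (ctr k σ) ((9 / 4 : ℝ) * ((m : ℝ) ^ k)⁻¹) ∧
        dist y b = Metric.infDist y (β : Set E)) →
      ∀ h : E → E,
        IsSimilitude h
          (Metric.diam (Metric.closedBall (ctr k σ) ((9 / 8 : ℝ) * ((m : ℝ) ^ k)⁻¹))) →
        (μ (Metric.closedBall (ctr k σ) ((9 / 8 : ℝ) * ((m : ℝ) ^ k)⁻¹))).toReal *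
            Metric.diam (Metric.closedBall (ctr k σ) ((9 / 8 : ℝ) * ((m : ℝ) ^ k)⁻¹)) ^ r *
            quantErrPow
              (condPull μ (Metric.closedBall (ctr k σ) ((9 / 8 : ℝ) * ((m : ℝ) ^ k)⁻¹)) h)
              r (n1 - 1) ≤
          ∫ x in Metric.closedBall (ctr k σ) ((9 / 8 : ℝ) * ((m : ℝ) ^ k)⁻¹),
            Metric.infDist x (β : Set E) ^ r ∂μ) ∧
    (¬(∃ y ∈ Metric.closedBall (ctr k σ) (((m : ℝ) ^ k)⁻¹) ∩ msupp μ, ∃ b ∈ β,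
        b ∉ Metric.closedBall (ctr k σ) ((9 / 4 : ℝ) * ((m : ℝ) ^ k)⁻¹) ∧
        dist y b = Metric.infDist y (β : Set E)) →
      ∀ h : E → E,
        IsSimilitude h (Metric.diam (Metric.closedBall (ctr k σ) (((m : ℝ) ^ k)⁻¹))) →
        (μ (Metric.closedBall (ctr k σ) (((m : ℝ) ^ k)⁻¹))).toReal *
            Metric.diam (Metric.closedBall (ctr k σ) (((m : ℝ) ^ k)⁻¹)) ^ r *
            quantErrPow (condPull μ (Metric.closedBall (ctr k σ) (((m : ℝ) ^ k)⁻¹)) h)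
              r (n1 - 1) ≤
          ∫ x in Metric.closedBall (ctr k σ) (((m : ℝ) ^ k)⁻¹),
            Metric.infDist x (β : Set E) ^ r ∂μ) := by
  set ρ : ℝ := ((m : ℝ) ^ k)⁻¹
  have hρ : 0 ≤ ρ := by positivity
  have hρε : ρ < ε0 :=
    calc ρ = ((m : ℝ)⁻¹) ^ k := (inv_pow _ _).symm
      _ ≤ ((m : ℝ)⁻¹) ^ k0 := pow_le_pow_of_le_one (by positivity) (Nat.cast_inv_le_one m) hk
      _ < ε0 := by
        rw [inv_pow]
        linarith [inv_nonneg.2 (pow_nonneg (Nat.cast_nonneg (α := ℝ) m) k0)]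
  have hc : ctr k σ ∈ msupp μ := (hctr k hk).1 σ
  refine ⟨fun ⟨y, ⟨hyc, hy⟩, b, hb, hbout, hyb⟩ h hh => ?_, fun hnear h hh => ?_⟩
  · refine le_setIntegral_infDist_rpow_of_far hμ hr hρ hρε hyc hy ?_ hn1 hh
    rw [mem_closedBall, not_le] at hbout
    rw [← hyb]
    linarith [dist_triangle b y (ctr k σ), dist_comm y b, mem_closedBall.1 hyc]
  · refine le_setIntegral_infDist_rpow_of_near hr (isCompact_closedBall _ _)
      (Nat.le_sub_one_of_lt hβcard) ⟨_, mem_closedBall_self hρ, hc⟩ (fun x hx => ?_) hh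
    obtain ⟨b, hb, hxb⟩ :=
      β.finite_toSet.isCompact.exists_infDist_eq_dist (Finset.coe_nonempty.2 hβ) x
    exact ⟨b, hb, not_not.1 fun hbA => hnear ⟨x, hx, b, hb, hbA, hxb.symm⟩, hxb.symm⟩

/-- Let `n1` satisfy `e_{n1−1,r}(ν)^r ≤ C1·C2⁻¹·18^{−(r+s0)}` for all Borel
probability measures `ν` with compact support of diameter at most `1`. If `σ ∈ Ω_k` and `β` is a
finite nonempty set with fewer than `n1` points in `B(c_σ,(9/4)m^{-k})`, then, writing
`E' = B(c_σ,(9/8)m^{-k})`: (i) if some `y ∈ E_σ ∩ K` has a `β`-nearest point outside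
`B(c_σ,(9/4)m^{-k})`, then `∫_{E'} d(x,β)^r dμ ≥ μ(E')·diam(E')^r·e_{n1−1,r}(λ_{E'})^r`;
(ii) otherwise `∫_{E_σ} d(x,β)^r dμ ≥ μ(E_σ)·diam(E_σ)^r·e_{n1−1,r}(λ_{E_σ})^r`. -/
theorem stmt12 {E : Type*} [NormedAddCommGroup E] [NormedSpace ℝ E]
    [MeasurableSpace E] [BorelSpace E] [FiniteDimensional ℝ E]
    (r : ℝ) (hr : 0 < r)
    (μ : MeasureTheory.Measure E) [MeasureTheory.IsProbabilityMeasure μ]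
    (s0 ε0 C1 C2 : ℝ) (hμ : IsAhlfors μ s0 ε0 C1 C2)
    (m : ℕ) (hm : 2 ≤ m) (k0 : ℕ)
    (hk0 : 2 * ((m : ℝ) ^ k0)⁻¹ < ε0)
    (hk0min : ∀ j : ℕ, 2 * ((m : ℝ) ^ j)⁻¹ < ε0 → k0 ≤ j)
    (φ : ℕ → ℕ)
    (hφ : ∀ k, k0 ≤ k →
      IsGreatest {j | PackingNum (msupp μ) (((m : ℝ) ^ k)⁻¹) j} (φ k))
    (ctr : (k : ℕ) → Fin (φ k) → E)
    (hctr : ∀ k, k0 ≤ k → (∀ i, ctr k i ∈ msupp μ) ∧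
      Pairwise fun i i' => Disjoint (Metric.closedBall (ctr k i) (((m : ℝ) ^ k)⁻¹))
        (Metric.closedBall (ctr k i') (((m : ℝ) ^ k)⁻¹)))
    (n1 : ℕ) (hn1pos : 1 ≤ n1)
    (hn1 : ∀ ν : MeasureTheory.Measure E, MeasureTheory.IsProbabilityMeasure ν →
      IsCompact (msupp ν) → Metric.diam (msupp ν) ≤ 1 →
      quantErrPow ν r (n1 - 1) ≤ C1 * C2⁻¹ * (18 : ℝ) ^ (-(r + s0)))
    (k : ℕ) (hk : k0 ≤ k) (σ : Fin (φ k)) (β : Finset E) (hβ : β.Nonempty)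
    (hβcard :
      ((β : Set E) ∩ Metric.closedBall (ctr k σ) ((9 / 4 : ℝ) * ((m : ℝ) ^ k)⁻¹)).ncard < n1) :
    ((∃ y ∈ Metric.closedBall (ctr k σ) (((m : ℝ) ^ k)⁻¹) ∩ msupp μ, ∃ b ∈ β,
        b ∉ Metric.closedBall (ctr k σ) ((9 / 4 : ℝ) * ((m : ℝ) ^ k)⁻¹) ∧
        dist y b = Metric.infDist y (β : Set E)) →
      ∀ h : E → E,
        IsSimilitude h
          (Metric.diam (Metric.closedBall (ctr k σ) ((9 / 8 : ℝ) * ((m : ℝ) ^ k)⁻¹))) →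
        (μ (Metric.closedBall (ctr k σ) ((9 / 8 : ℝ) * ((m : ℝ) ^ k)⁻¹))).toReal *
            Metric.diam (Metric.closedBall (ctr k σ) ((9 / 8 : ℝ) * ((m : ℝ) ^ k)⁻¹)) ^ r *
            quantErrPow
              (condPull μ (Metric.closedBall (ctr k σ) ((9 / 8 : ℝ) * ((m : ℝ) ^ k)⁻¹)) h)
              r (n1 - 1) ≤
          ∫ x in Metric.closedBall (ctr k σ) ((9 / 8 : ℝ) * ((m : ℝ) ^ k)⁻¹),
            Metric.infDist x (β : Set E) ^ r ∂μ) ∧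
    (¬(∃ y ∈ Metric.closedBall (ctr k σ) (((m : ℝ) ^ k)⁻¹) ∩ msupp μ, ∃ b ∈ β,
        b ∉ Metric.closedBall (ctr k σ) ((9 / 4 : ℝ) * ((m : ℝ) ^ k)⁻¹) ∧
        dist y b = Metric.infDist y (β : Set E)) →
      ∀ h : E → E,
        IsSimilitude h (Metric.diam (Metric.closedBall (ctr k σ) (((m : ℝ) ^ k)⁻¹))) →
        (μ (Metric.closedBall (ctr k σ) (((m : ℝ) ^ k)⁻¹))).toReal *
            Metric.diam (Metric.closedBall (ctr k σ) (((m : ℝ) ^ k)⁻¹)) ^ r *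
            quantErrPow (condPull μ (Metric.closedBall (ctr k σ) (((m : ℝ) ^ k)⁻¹)) h)
              r (n1 - 1) ≤
          ∫ x in Metric.closedBall (ctr k σ) (((m : ℝ) ^ k)⁻¹),
            Metric.infDist x (β : Set E) ^ r ∂μ) :=
  stmt12_general r hr μ s0 ε0 C1 C2 hμ m k0 hk0 φ ctr hctr n1 hn1 k hk σ β hβ hβcard
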